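/- If H₀ = I and H_{k+1} is obtained from H_k by a block BFGS update with matrices G_k satisfying λI ⪯ G_k ⪯ ΛI and full-rank sketches D_k, then after M updates: λ_min(H_M) ≥ 1/(1 + MΛ) and λ_max(H_M) ≤ (1+√κ)^{2M}(1 + 1/(λ(2√κ + κ))), where κ = Λ/λ. -/

import Mathlib

/-!
Write `P = D (DᵀGD)⁻¹ Dᵀ` and `v = G P x`. The quadratic form of the updated matrix `H'` is
`xᵀPx + (x - v)ᵀ H (x - v)`, and since `PGP = P` we have `xᵀPx = (Px)ᵀG(Px)`, which
`λI ⪯ G ⪯ ΛI` traps as `|v|² ≤ Λ xᵀPx` and `λ xᵀPx ≤ |x|²`. Splitting `x = (x - v) + v`, resp.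
`x - v = x + (-v)`, with the weighted inequality `|a + b|² ≤ (1 + t)|a|² + (1 + 1/t)|b|²` shows
that `H ⪰ cI` implies `H' ⪰ c/(1 + cΛ) I` (take `t = cΛ`) and `H ⪯ uI` implies
`H' ⪯ ((1 + √κ)²u + 1/λ) I` (take `t = √κ`). From `H₀ = I` the first recursion gives
`1/(1 + kΛ)`, and the second, whose fixed point is `-1/(λ(2√κ + κ))`, gives
`(1 + √κ)^{2k}(1 + e) - e` with `e = 1/(λ(2√κ + κ))`.
-/

open Matrix

namespace Matrix

variable {n m : Type*} [Fintype n] [Fintype m]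

theorem PosSemidef.two_mul_mul_dotProduct_mulVec_le {M : Matrix n n ℝ} (hM : M.PosSemidef)
    (t : ℝ) (x y : n → ℝ) :
    2 * t * (x ⬝ᵥ M *ᵥ y) ≤ t ^ 2 * (x ⬝ᵥ M *ᵥ x) + y ⬝ᵥ M *ᵥ y := by
  have h := hM.dotProduct_mulVec_nonneg (t • x - y)
  have hyx : y ⬝ᵥ M *ᵥ x = x ⬝ᵥ M *ᵥ y := by
    rw [← dotProduct_transpose_mulVec, (isHermitian_iff_isSymm.mp hM.isHermitian).eq]
  simp only [star_trivial, mulVec_sub, mulVec_smul, sub_dotProduct, dotProduct_sub,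
    smul_dotProduct, dotProduct_smul, smul_eq_mul, hyx] at h
  nlinarith

omit [Fintype n] in
theorem mulVec_injective_of_rank_eq_card {D : Matrix n m ℝ} (hD : D.rank = Fintype.card m) :
    Function.Injective D.mulVec :=
  mulVec_injective_iff.mpr <| linearIndependent_iff_card_eq_finrank_span.mpr <|
    hD.symm.trans D.rank_eq_finrank_span_cols

theorem isUnit_det_transpose_mul_mul_same [DecidableEq m] {G : Matrix n n ℝ} {D : Matrix n m ℝ} (hG : G.PosDef)
    (hD : Function.Injective D.mulVec) : IsUnit (Dᵀ * G * D).det := by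
  have hA := hG.conjTranspose_mul_mul_same hD
  rw [conjTranspose_eq_transpose_of_trivial] at hA
  exact hA.det_pos.ne'.isUnit

variable [DecidableEq n]

theorem add_dotProduct_add_le {t : ℝ} (ht : 0 < t) (x y : n → ℝ) :
    (x + y) ⬝ᵥ (x + y) ≤ (1 + t) * (x ⬝ᵥ x) + (1 + t⁻¹) * (y ⬝ᵥ y) := by
  have hxy : 2 * (x ⬝ᵥ y) ≤ t * (x ⬝ᵥ x) + t⁻¹ * (y ⬝ᵥ y) := by
    have h := PosSemidef.one.two_mul_mul_dotProduct_mulVec_le t x y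
    rw [one_mulVec, one_mulVec] at h
    rw [← mul_le_mul_iff_of_pos_left ht]
    field_simp
    linarith
  simp only [add_dotProduct, dotProduct_add, dotProduct_comm y x]
  linarith

theorem posSemidef_sub_smul_one_iff {H : Matrix n n ℝ} {c : ℝ} :
    (H - c • 1).PosSemidef ↔ H.IsSymm ∧ ∀ x, c * (x ⬝ᵥ x) ≤ x ⬝ᵥ H *ᵥ x := by
  simp only [posSemidef_iff_dotProduct_mulVec, isHermitian_iff_isSymm, IsSymm,
    transpose_sub, transpose_smul, transpose_one, sub_left_inj, star_trivial, sub_mulVec,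
    smul_mulVec, one_mulVec, dotProduct_sub, dotProduct_smul, smul_eq_mul, sub_nonneg]

theorem posSemidef_smul_one_sub_iff {H : Matrix n n ℝ} {c : ℝ} :
    (c • 1 - H).PosSemidef ↔ H.IsSymm ∧ ∀ x, x ⬝ᵥ H *ᵥ x ≤ c * (x ⬝ᵥ x) := by
  simp only [posSemidef_iff_dotProduct_mulVec, isHermitian_iff_isSymm, IsSymm,
    transpose_sub, transpose_smul, transpose_one, sub_right_inj, star_trivial, sub_mulVec,
    smul_mulVec, one_mulVec, dotProduct_sub, dotProduct_smul, smul_eq_mul, sub_nonneg]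

omit [Fintype n] in
theorem posDef_of_posSemidef_sub_smul_one {G : Matrix n n ℝ} {lam : ℝ} (hlam : 0 < lam)
    (hlo : (G - lam • 1).PosSemidef) : G.PosDef := by
  simpa using PosDef.posSemidef_add hlo (PosDef.one.smul hlam)

theorem PosSemidef.mulVec_dotProduct_mulVec_le {G : Matrix n n ℝ} {Lam : ℝ} (hG : G.PosSemidef)
    (hLam : 0 < Lam) (hhi : (Lam • 1 - G).PosSemidef) (w : n → ℝ) :
    G *ᵥ w ⬝ᵥ G *ᵥ w ≤ Lam * (w ⬝ᵥ G *ᵥ w) := by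
  have hamgm := hG.two_mul_mul_dotProduct_mulVec_le Lam w (G *ᵥ w)
  have hGw := (posSemidef_smul_one_sub_iff.mp hhi).2 (G *ᵥ w)
  have hGG : w ⬝ᵥ G *ᵥ G *ᵥ w = G *ᵥ w ⬝ᵥ G *ᵥ w := by
    rw [dotProduct_mulVec, ← mulVec_transpose, (isHermitian_iff_isSymm.mp hG.isHermitian).eq]
  rw [hGG] at hamgm
  have h : Lam * (G *ᵥ w ⬝ᵥ G *ᵥ w) ≤ Lam * (Lam * (w ⬝ᵥ G *ᵥ w)) := by nlinarith
  exact le_of_mul_le_mul_left h hLam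

end Matrix

section BlockBFGS

variable {n m : Type*} [Fintype n] [Fintype m] [DecidableEq n] [DecidableEq m]

noncomputable section

/-- `sketchProj G D * G` is the `G`-orthogonal projection onto the range of `D`. -/
def sketchProj (G : Matrix n n ℝ) (D : Matrix n m ℝ) : Matrix n n ℝ :=
  D * (Dᵀ * G * D)⁻¹ * Dᵀ

def blockBFGSUpdate (G : Matrix n n ℝ) (D : Matrix n m ℝ) (H : Matrix n n ℝ) : Matrix n n ℝ :=
  sketchProj G D +
    (1 - D * (Dᵀ * G * D)⁻¹ * (G * D)ᵀ) * H * (1 - G * D * (Dᵀ * G * D)⁻¹ * Dᵀ)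

end

variable {G : Matrix n n ℝ} {D : Matrix n m ℝ}

omit [DecidableEq n] in
theorem Matrix.IsSymm.inv_transpose_mul_mul_same (hG : G.IsSymm) :
    (Dᵀ * (G * D))⁻¹.IsSymm := by
  rw [IsSymm, transpose_nonsing_inv, transpose_mul, transpose_mul, transpose_transpose, hG.eq,
    Matrix.mul_assoc]

theorem isSymm_blockBFGSUpdate (hG : G.IsSymm) {H : Matrix n n ℝ} (hH : H.IsSymm) :
    (blockBFGSUpdate G D H).IsSymm := by
  simp only [blockBFGSUpdate, sketchProj, IsSymm, transpose_add, transpose_mul, transpose_sub,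
    transpose_one, transpose_transpose, Matrix.mul_assoc, hG.inv_transpose_mul_mul_same.eq,
    hG.eq, hH.eq]

theorem dotProduct_blockBFGSUpdate_mulVec (hG : G.IsSymm) (H : Matrix n n ℝ) (x : n → ℝ) :
    x ⬝ᵥ blockBFGSUpdate G D H *ᵥ x = x ⬝ᵥ sketchProj G D *ᵥ x +
      (x - G *ᵥ sketchProj G D *ᵥ x) ⬝ᵥ H *ᵥ (x - G *ᵥ sketchProj G D *ᵥ x) := by
  rw [blockBFGSUpdate]
  set E := 1 - G * D * (Dᵀ * G * D)⁻¹ * Dᵀ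
  have hE : E *ᵥ x = x - G *ᵥ sketchProj G D *ᵥ x := by
    simp only [E, sketchProj, sub_mulVec, one_mulVec, mulVec_mulVec, Matrix.mul_assoc]
  have hEt : 1 - D * (Dᵀ * G * D)⁻¹ * (G * D)ᵀ = Eᵀ := by
    simp only [E, transpose_sub, transpose_one, transpose_mul, transpose_transpose,
      Matrix.mul_assoc, hG.inv_transpose_mul_mul_same.eq, hG.eq]
  rw [add_mulVec, dotProduct_add, hEt, ← mulVec_mulVec, ← mulVec_mulVec, dotProduct_mulVec x Eᵀ,
    vecMul_transpose, hE]

omit [DecidableEq n] in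
theorem dotProduct_sketchProj_mulVec (hA : IsUnit (Dᵀ * G * D).det) (x : n → ℝ) :
    x ⬝ᵥ sketchProj G D *ᵥ x = sketchProj G D *ᵥ x ⬝ᵥ G *ᵥ sketchProj G D *ᵥ x := by
  have hDGw : Dᵀ *ᵥ G *ᵥ sketchProj G D *ᵥ x = Dᵀ *ᵥ x := by
    simp only [sketchProj, mulVec_mulVec, ← Matrix.mul_assoc, mul_nonsing_inv _ hA,
      Matrix.one_mul]
  set z := (Dᵀ * G * D)⁻¹ *ᵥ Dᵀ *ᵥ x
  have hw : sketchProj G D *ᵥ x = D *ᵥ z := by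
    simp only [z, sketchProj, mulVec_mulVec, Matrix.mul_assoc]
  calc x ⬝ᵥ sketchProj G D *ᵥ x = Dᵀ *ᵥ x ⬝ᵥ z := by
        rw [hw, dotProduct_mulVec, mulVec_transpose]
    _ = Dᵀ *ᵥ G *ᵥ sketchProj G D *ᵥ x ⬝ᵥ z := by rw [hDGw]
    _ = sketchProj G D *ᵥ x ⬝ᵥ G *ᵥ sketchProj G D *ᵥ x := by
        rw [mulVec_transpose, ← dotProduct_mulVec, ← hw, dotProduct_comm]

theorem mul_dotProduct_sketchProj_mulVec_le {lam : ℝ} (hlam : 0 ≤ lam)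
    (hlo : (G - lam • 1).PosSemidef) (hA : IsUnit (Dᵀ * G * D).det) (x : n → ℝ) :
    lam * (x ⬝ᵥ sketchProj G D *ᵥ x) ≤ x ⬝ᵥ x := by
  set w := sketchProj G D *ᵥ x
  have hp : x ⬝ᵥ w = w ⬝ᵥ G *ᵥ w := dotProduct_sketchProj_mulVec hA x
  have hw := mul_le_mul_of_nonneg_left ((posSemidef_sub_smul_one_iff.mp hlo).2 w) hlam
  have hamgm := PosSemidef.one.two_mul_mul_dotProduct_mulVec_le lam w x
  rw [one_mulVec, one_mulVec, dotProduct_comm w x] at hamgm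
  nlinarith

theorem mulVec_sketchProj_dotProduct_le {Lam : ℝ} (hG : G.PosDef) (hLam : 0 < Lam)
    (hhi : (Lam • 1 - G).PosSemidef) (hA : IsUnit (Dᵀ * G * D).det) (x : n → ℝ) :
    G *ᵥ sketchProj G D *ᵥ x ⬝ᵥ G *ᵥ sketchProj G D *ᵥ x ≤ Lam * (x ⬝ᵥ sketchProj G D *ᵥ x) := by
  rw [dotProduct_sketchProj_mulVec hA]
  exact hG.posSemidef.mulVec_dotProduct_mulVec_le hLam hhi _

theorem posSemidef_blockBFGSUpdate_sub_smul_one {Lam c : ℝ} (hG : G.PosDef) (hLam : 0 < Lam)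
    (hhi : (Lam • 1 - G).PosSemidef) (hD : Function.Injective D.mulVec) (hc : 0 < c)
    {H : Matrix n n ℝ} (hH : (H - c • 1).PosSemidef) :
    (blockBFGSUpdate G D H - (c / (1 + c * Lam)) • 1).PosSemidef := by
  have hGs : G.IsSymm := isHermitian_iff_isSymm.mp hG.isHermitian
  have hA := isUnit_det_transpose_mul_mul_same hG hD
  rw [posSemidef_sub_smul_one_iff] at hH ⊢
  refine ⟨isSymm_blockBFGSUpdate hGs hH.1, fun x => ?_⟩
  rw [dotProduct_blockBFGSUpdate_mulVec hGs]
  set p := x ⬝ᵥ sketchProj G D *ᵥ x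
  set v := G *ᵥ sketchProj G D *ᵥ x
  have hv : v ⬝ᵥ v ≤ Lam * p := mulVec_sketchProj_dotProduct_le hG hLam hhi hA x
  have hsplit := add_dotProduct_add_le (by positivity : 0 < c * Lam) (x - v) v
  rw [sub_add_cancel] at hsplit
  have key : c * (x ⬝ᵥ x) ≤ (1 + c * Lam) * (p + c * ((x - v) ⬝ᵥ (x - v))) :=
    calc c * (x ⬝ᵥ x)
        ≤ c * ((1 + c * Lam) * ((x - v) ⬝ᵥ (x - v)) + (1 + (c * Lam)⁻¹) * (Lam * p)) := by
          gcongr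
          exact hsplit.trans (by gcongr)
      _ = (1 + c * Lam) * (p + c * ((x - v) ⬝ᵥ (x - v))) := by
          field_simp
          ring
  have hy := mul_le_mul_of_nonneg_left (hH.2 (x - v)) (by positivity : (0 : ℝ) ≤ 1 + c * Lam)
  rw [div_mul_eq_mul_div, div_le_iff₀ (by positivity)]
  linarith

theorem posSemidef_smul_one_sub_blockBFGSUpdate {lam Lam u : ℝ} (hlam : 0 < lam) (hLam : 0 < Lam)
    (hlo : (G - lam • 1).PosSemidef) (hhi : (Lam • 1 - G).PosSemidef)
    (hD : Function.Injective D.mulVec) (hu : 0 ≤ u) {H : Matrix n n ℝ}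
    (hH : (u • 1 - H).PosSemidef) :
    (((1 + √(Lam / lam)) ^ 2 * u + 1 / lam) • 1 - blockBFGSUpdate G D H).PosSemidef := by
  have hG := posDef_of_posSemidef_sub_smul_one hlam hlo
  have hGs : G.IsSymm := isHermitian_iff_isSymm.mp hG.isHermitian
  have hA := isUnit_det_transpose_mul_mul_same hG hD
  rw [posSemidef_smul_one_sub_iff] at hH ⊢
  refine ⟨isSymm_blockBFGSUpdate hGs hH.1, fun x => ?_⟩
  rw [dotProduct_blockBFGSUpdate_mulVec hGs]
  set r := √(Lam / lam)
  have hr : 0 < r := Real.sqrt_pos.mpr (div_pos hLam hlam)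
  have hr2 : r ^ 2 = Lam / lam := Real.sq_sqrt (div_pos hLam hlam).le
  set p := x ⬝ᵥ sketchProj G D *ᵥ x
  set v := G *ᵥ sketchProj G D *ᵥ x
  have hp : p ≤ (x ⬝ᵥ x) / lam := by
    rw [le_div_iff₀ hlam, mul_comm]
    exact mul_dotProduct_sketchProj_mulVec_le hlam.le hlo hA x
  have hv : v ⬝ᵥ v ≤ r ^ 2 * (x ⬝ᵥ x) :=
    calc v ⬝ᵥ v ≤ Lam * p := mulVec_sketchProj_dotProduct_le hG hLam hhi hA x
      _ ≤ Lam * ((x ⬝ᵥ x) / lam) := by gcongr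
      _ = r ^ 2 * (x ⬝ᵥ x) := by rw [hr2]; ring
  have hy : (x - v) ⬝ᵥ (x - v) ≤ (1 + r) ^ 2 * (x ⬝ᵥ x) :=
    calc (x - v) ⬝ᵥ (x - v) ≤ (1 + r) * (x ⬝ᵥ x) + (1 + r⁻¹) * (v ⬝ᵥ v) := by
          simpa [sub_eq_add_neg] using add_dotProduct_add_le hr x (-v)
      _ ≤ (1 + r) * (x ⬝ᵥ x) + (1 + r⁻¹) * (r ^ 2 * (x ⬝ᵥ x)) := by gcongr
      _ = (1 + r) ^ 2 * (x ⬝ᵥ x) := by field_simp; ring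
  calc p + (x - v) ⬝ᵥ H *ᵥ (x - v) ≤ (x ⬝ᵥ x) / lam + u * ((1 + r) ^ 2 * (x ⬝ᵥ x)) :=
        add_le_add hp ((hH.2 _).trans (by gcongr))
    _ = ((1 + r) ^ 2 * u + 1 / lam) * (x ⬝ᵥ x) := by ring

variable {G : ℕ → Matrix n n ℝ} {D : ℕ → Matrix n m ℝ} {H : ℕ → Matrix n n ℝ}

theorem posSemidef_sub_smul_one_of_blockBFGSUpdate_rec {Lam : ℝ} (hG : ∀ k, (G k).PosDef)
    (hLam : 0 < Lam) (hhi : ∀ k, (Lam • 1 - G k).PosSemidef)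
    (hD : ∀ k, Function.Injective (D k).mulVec) (hH0 : H 0 = 1)
    (hrec : ∀ k, H (k + 1) = blockBFGSUpdate (G k) (D k) (H k)) (k : ℕ) :
    (H k - (1 / (1 + k * Lam)) • 1).PosSemidef := by
  induction k with
  | zero => simpa [hH0] using PosSemidef.zero
  | succ k ih =>
    have hstep := posSemidef_blockBFGSUpdate_sub_smul_one (hG k) hLam (hhi k) (hD k)
      (by positivity) ih
    rw [hrec k]
    convert hstep using 3
    field_simp
    push_cast
    ring

theorem posSemidef_smul_one_sub_of_blockBFGSUpdate_rec {lam Lam : ℝ} (hlam : 0 < lam)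
    (hLam : 0 < Lam) (hlo : ∀ k, (G k - lam • 1).PosSemidef)
    (hhi : ∀ k, (Lam • 1 - G k).PosSemidef) (hD : ∀ k, Function.Injective (D k).mulVec)
    (hH0 : H 0 = 1) (hrec : ∀ k, H (k + 1) = blockBFGSUpdate (G k) (D k) (H k)) (k : ℕ) :
    let e := 1 / (lam * (2 * √(Lam / lam) + Lam / lam))
    (((1 + √(Lam / lam)) ^ (2 * k) * (1 + e) - e) • 1 - H k).PosSemidef := by
  intro e
  have hr : 0 < √(Lam / lam) := Real.sqrt_pos.mpr (div_pos hLam hlam)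
  have he : 0 ≤ e := by positivity
  induction k with
  | zero => simpa [hH0] using PosSemidef.zero
  | succ k ih =>
    have hu : 0 ≤ (1 + √(Lam / lam)) ^ (2 * k) * (1 + e) - e := by
      nlinarith [one_le_pow₀ (n := 2 * k) (by linarith : 1 ≤ 1 + √(Lam / lam))]
    have hstep := posSemidef_smul_one_sub_blockBFGSUpdate hlam hLam (hlo k) (hhi k) (hD k) hu ih
    rw [hrec k]
    convert hstep using 3
    have hr2 : √(Lam / lam) ^ 2 = Lam / lam := Real.sq_sqrt (div_pos hLam hlam).le
    have hρe : ((1 + √(Lam / lam)) ^ 2 - 1) * e = 1 / lam := by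
      have hX : 0 < 2 * √(Lam / lam) + Lam / lam := by positivity
      rw [show (1 + √(Lam / lam)) ^ 2 - 1 = 2 * √(Lam / lam) + Lam / lam by
        linear_combination hr2]
      simp only [e]
      field_simp
    rw [Nat.mul_succ, pow_add]
    linear_combination hρe

end BlockBFGS

theorem limited_memory_block_bfgs_eigenvalue_bounds_general {d q : ℕ}
    (lam Lam : ℝ) (hlam : 0 < lam) (hll : lam ≤ Lam) (M : ℕ)
    (G : ℕ → Matrix (Fin d) (Fin d) ℝ) (D : ℕ → Matrix (Fin d) (Fin q) ℝ)
    (hlo : ∀ k, (G k - lam • (1 : Matrix (Fin d) (Fin d) ℝ)).PosSemidef)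
    (hhi : ∀ k, ((Lam • (1 : Matrix (Fin d) (Fin d) ℝ)) - G k).PosSemidef)
    (hD : ∀ k, (D k).rank = q)
    (H : ℕ → Matrix (Fin d) (Fin d) ℝ) (hH0 : H 0 = 1)
    (hrec : ∀ k, H (k + 1) =
      D k * ((D k)ᵀ * G k * D k)⁻¹ * (D k)ᵀ +
      (1 - D k * ((D k)ᵀ * G k * D k)⁻¹ * (G k * D k)ᵀ) * H k *
        (1 - (G k * D k) * ((D k)ᵀ * G k * D k)⁻¹ * (D k)ᵀ)) :
    (H M - (1 / (1 + (M : ℝ) * Lam)) • (1 : Matrix (Fin d) (Fin d) ℝ)).PosSemidef ∧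
    (((1 + Real.sqrt (Lam / lam)) ^ (2 * M) *
        (1 + 1 / (lam * (2 * Real.sqrt (Lam / lam) + Lam / lam)))) •
        (1 : Matrix (Fin d) (Fin d) ℝ) - H M).PosSemidef := by
  have hLam : 0 < Lam := hlam.trans_le hll
  have hG k : (G k).PosDef := posDef_of_posSemidef_sub_smul_one hlam (hlo k)
  have hDinj k : Function.Injective (D k).mulVec :=
    mulVec_injective_of_rank_eq_card (by rw [hD k, Fintype.card_fin])
  have hrec' k : H (k + 1) = blockBFGSUpdate (G k) (D k) (H k) := hrec k
  refine ⟨posSemidef_sub_smul_one_of_blockBFGSUpdate_rec hG hLam hhi hDinj hH0 hrec' M, ?_⟩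
  have hupper :=
    posSemidef_smul_one_sub_of_blockBFGSUpdate_rec hlam hLam hlo hhi hDinj hH0 hrec' M
  have he : 0 ≤ 1 / (lam * (2 * √(Lam / lam) + Lam / lam)) := by positivity
  convert hupper.add (PosSemidef.one.smul he) using 1
  module

/-- If `H₀ = I` and `H_{k+1}` is obtained from `H_k` by a block BFGS update with matrices
`G_k` satisfying `λI ⪯ G_k ⪯ ΛI` and full-rank sketches `D_k`, then after `M` updates
`λ_min(H_M) ≥ 1/(1 + MΛ)` and `λ_max(H_M) ≤ (1+√κ)^{2M}(1 + 1/(λ(2√κ + κ)))` with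
`κ = Λ/λ` (stated via the Loewner order). -/
theorem limited_memory_block_bfgs_eigenvalue_bounds {d q : ℕ}
    (lam Lam : ℝ) (hlam : 0 < lam) (hll : lam ≤ Lam) (M : ℕ)
    (G : ℕ → Matrix (Fin d) (Fin d) ℝ) (D : ℕ → Matrix (Fin d) (Fin q) ℝ)
    (hGsym : ∀ k, (G k).IsSymm)
    (hlo : ∀ k, (G k - lam • (1 : Matrix (Fin d) (Fin d) ℝ)).PosSemidef)
    (hhi : ∀ k, ((Lam • (1 : Matrix (Fin d) (Fin d) ℝ)) - G k).PosSemidef)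
    (hD : ∀ k, (D k).rank = q)
    (H : ℕ → Matrix (Fin d) (Fin d) ℝ) (hH0 : H 0 = 1)
    (hrec : ∀ k, H (k + 1) =
      D k * ((D k)ᵀ * G k * D k)⁻¹ * (D k)ᵀ +
      (1 - D k * ((D k)ᵀ * G k * D k)⁻¹ * (G k * D k)ᵀ) * H k *
        (1 - (G k * D k) * ((D k)ᵀ * G k * D k)⁻¹ * (D k)ᵀ)) :
    (H M - (1 / (1 + (M : ℝ) * Lam)) • (1 : Matrix (Fin d) (Fin d) ℝ)).PosSemidef ∧
    (((1 + Real.sqrt (Lam / lam)) ^ (2 * M) *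
        (1 + 1 / (lam * (2 * Real.sqrt (Lam / lam) + Lam / lam)))) •
        (1 : Matrix (Fin d) (Fin d) ℝ) - H M).PosSemidef :=
  limited_memory_block_bfgs_eigenvalue_bounds_general lam Lam hlam hll M G D hlo hhi hD H hH0 hrec
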